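/- If a subset S of C^2 is contained in the complex algebraic curve {(X,Y) : (X-u)^2 + (Y-v)^2 = r} for some complex constants u, v, r, and S contains infinitely many points of R^2 not all lying on a common real line, then u, v, r are all real, and S ∩ R^2 is contained in the real circle of center (u,v) and radius sqrt(r) (with r ≥ 0). -/
import Mathlib


/-- If `S ⊆ ℂ²` lies on the complexified circle `(X-u)² + (Y-v)² = r`, and the real
points of `S` are infinite and not collinear, then `u, v, r` are real with `r ≥ 0`
and the real points of `S` lie on the real circle of center `(u,v)` and radius `√r`. -/
theorem complexified_circle_real_locus (S : Set (ℂ × ℂ)) (u v r : ℂ)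
    (hS : ∀ p ∈ S, (p.1 - u)^2 + (p.2 - v)^2 = r)
    (real : Set (ℂ × ℂ))
    (hreal : real = {p ∈ S | p.1.im = 0 ∧ p.2.im = 0})
    (hinf : real.Infinite)
    (hnoncol : ¬ ∃ a b c : ℝ, (a, b) ≠ (0, 0) ∧
      ∀ p ∈ real, a * p.1.re + b * p.2.re + c = 0) :
    u.im = 0 ∧ v.im = 0 ∧ r.im = 0 ∧ 0 ≤ r.re ∧
      ∀ p ∈ real, (p.1.re - u.re)^2 + (p.2.re - v.re)^2 = (Real.sqrt r.re)^2 := by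
  -- imaginary part of the equation at real points
  have key : ∀ p ∈ real,
      (-2*u.im) * p.1.re + (-2*v.im) * p.2.re +
        (2*u.re*u.im + 2*v.re*v.im - r.im) = 0 ∧
      (p.1.re - u.re)^2 + (p.2.re - v.re)^2 - u.im^2 - v.im^2 = r.re := by
    intro p hp
    rw [hreal] at hp
    obtain ⟨hpS, h1, h2⟩ := hp
    have := hS p hpS
    have him := congrArg Complex.im this
    have hre := congrArg Complex.re this
    simp [Complex.sub_im, Complex.sub_re, pow_two, Complex.mul_im, Complex.mul_re,
      Complex.add_im, Complex.add_re, h1, h2] at him hre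
    constructor <;> [skip; skip] <;> nlinarith [him, hre]
  have huv : u.im = 0 ∧ v.im = 0 := by
    by_contra h
    apply hnoncol
    refine ⟨-2*u.im, -2*v.im, 2*u.re*u.im + 2*v.re*v.im - r.im, ?_, fun p hp => (key p hp).1⟩
    intro ha
    rw [Prod.mk.injEq] at ha
    have hu : u.im = 0 := by linarith [ha.1]
    have hv : v.im = 0 := by linarith [ha.2]
    exact h ⟨hu, hv⟩
  obtain ⟨hu, hv⟩ := huv
  obtain ⟨p, hp⟩ := hinf.nonempty
  have kp := key p hp
  have hrim : r.im = 0 := by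
    have := kp.1
    simp [hu, hv] at this
    linarith
  have hcirc : ∀ q ∈ real, (q.1.re - u.re)^2 + (q.2.re - v.re)^2 = r.re := by
    intro q hq
    have := (key q hq).2
    simp [hu, hv] at this
    linarith
  have hrre : 0 ≤ r.re := by
    have := hcirc p hp
    nlinarith
  refine ⟨hu, hv, hrim, hrre, fun q hq => ?_⟩
  rw [Real.sq_sqrt hrre]
  exact hcirc q hq
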